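/- arXiv:2105.13651 — 8 statements merged into one kernel-verified Lean document; each statement's English description precedes it below -/
import Mathlib

section
/- A polynomial p ∈ ℂ[λ] satisfies the functional equation (λ − μ)·p(λ + μ) = λ·p(λ) − μ·p(μ) for all λ, μ if and only if there exist α, β ∈ ℂ such that p(λ) = αλ + β. -/
open Polynomial

theorem stmt_0 (p : Polynomial ℂ) :
    (∀ l m : ℂ, (l - m) * p.eval (l + m) = l * p.eval l - m * p.eval m) ↔
      ∃ α β : ℂ, p = C α * X + C β := by
  constructor
  · intro h
    refine ⟨p.eval 1 - p.eval 0, p.eval 0, ?_⟩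
    apply Polynomial.funext
    intro x
    simp only [Polynomial.eval_add, Polynomial.eval_mul, Polynomial.eval_C, Polynomial.eval_X]
    have h1 := h x 1
    have h2 := h (x + 1) (-1)
    rw [show x + 1 + -1 = x from by ring] at h2
    have h3 := h 1 (-1)
    rw [show (1 : ℂ) + -1 = 0 from by ring] at h3
    linear_combination (-(x + 1) / 2) * h1 + (-(x - 1) / 2) * h2 + ((x - 1) / 2) * h3
  · rintro ⟨α, β, rfl⟩
    intro l m
    simp only [Polynomial.eval_add, Polynomial.eval_mul, Polynomial.eval_C, Polynomial.eval_X]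
    ring
end

section
/- Let a, b ∈ ℂ and let f ∈ ℂ[λ] be a nonzero polynomial satisfying f(λ + μ)·((a − 1)λ − μ + b) = −μ·f(μ) as polynomials in λ and μ. Then a = 1, b = 0, and f is a nonzero constant. -/
open Polynomial

theorem stmt_1 (a b : ℂ) (f : Polynomial ℂ) (hf : f ≠ 0)
    (h : ∀ l m : ℂ, f.eval (l + m) * ((a - 1) * l - m + b) = -m * f.eval m) :
    a = 1 ∧ b = 0 ∧ ∃ c : ℂ, c ≠ 0 ∧ f = C c := by
  have hb : b = 0 := by
    by_contra hb
    apply hf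
    apply Polynomial.funext (q := 0)
    intro m
    have h0 := h 0 m
    have hm : f.eval m * b = 0 := by
      have : (0 : ℂ) + m = m := zero_add m
      rw [this] at h0
      linear_combination h0
    simpa [eval_zero] using (mul_eq_zero.mp hm).resolve_right hb
  have ha : a = 1 := by
    by_contra ha
    apply hf
    apply Polynomial.eq_zero_of_infinite_isRoot
    apply Set.Infinite.mono (s := {x : ℂ | x ≠ 0})
    · intro x hx
      have := h x 0
      simp only [add_zero, hb, neg_zero, zero_mul, mul_zero, sub_zero] at this
      rcases mul_eq_zero.mp this with h1 | h2
      · exact h1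
      · rcases mul_eq_zero.mp h2 with h3 | h4
        · exact absurd h3 (sub_ne_zero.mpr ha)
        · exact absurd h4 hx
    · exact Set.infinite_of_injective_forall_mem (f := fun n : ℕ => (n : ℂ) + 1)
        (fun m n hmn => by exact_mod_cast add_right_cancel hmn)
        (fun n => by
          exact Nat.cast_add_one_ne_zero n)
  refine ⟨ha, hb, f.eval 1, ?_, ?_⟩
  · intro hc
    apply hf
    apply Polynomial.funext (q := 0)
    intro x
    have := h (x - 1) 1
    rw [sub_add_cancel, ha, hb] at this
    simp only [eval_zero]
    have hx : f.eval x = f.eval 1 := by linear_combination -this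
    rw [hx, hc]
  · apply Polynomial.funext
    intro x
    have := h (x - 1) 1
    rw [sub_add_cancel, ha, hb] at this
    have hx : f.eval x = f.eval 1 := by linear_combination -this
    simpa using hx
end

section
/- A polynomial Q ∈ ℂ[∂, λ] satisfies (λ − μ)·Q(∂, λ + μ) = (∂ + λ + 2μ)·Q(∂, λ) − (∂ + 2λ + μ)·Q(∂, μ) as polynomials in ∂, λ, μ if and only if there exists f ∈ ℂ[∂] with Q(∂, λ) = (∂ + 2λ)·f(∂). -/
open Polynomial

private lemma eval_aeval_aux (Q : MvPolynomial (Fin 2) ℂ) (l d : ℂ) :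
    (MvPolynomial.aeval ![(X : Polynomial ℂ), C l] Q).eval d = MvPolynomial.eval ![d, l] Q := by
  induction Q using MvPolynomial.induction_on with
  | C a => simp
  | add p q hp hq => simp [hp, hq]
  | mul_X p i hp =>
    simp [hp]
    fin_cases i <;> simp

theorem stmt_5 (Q : MvPolynomial (Fin 2) ℂ) :
    (∀ d l m : ℂ,
        (l - m) * MvPolynomial.eval ![d, l + m] Q =
          (d + l + 2 * m) * MvPolynomial.eval ![d, l] Q -
            (d + 2 * l + m) * MvPolynomial.eval ![d, m] Q) ↔
      ∃ f : Polynomial ℂ, ∀ d l : ℂ,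
        MvPolynomial.eval ![d, l] Q = (d + 2 * l) * f.eval d := by
  constructor
  · intro h
    -- key identity: d * Q(d,l) = (d + 2l) * Q(d,0)
    have key : ∀ d l : ℂ, d * MvPolynomial.eval ![d, l] Q
        = (d + 2 * l) * MvPolynomial.eval ![d, 0] Q := by
      intro d l
      have := h d l 0
      simp only [add_zero, mul_zero] at this
      linear_combination -this
    -- Q(0,0) = 0
    have h00 : MvPolynomial.eval ![(0:ℂ), 0] Q = 0 := by
      have := key 0 1
      simpa using this
    -- polynomial g(d) = Q(d,0)
    set g : Polynomial ℂ := MvPolynomial.aeval ![(X : Polynomial ℂ), C 0] Q with hg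
    have hgev : ∀ d : ℂ, g.eval d = MvPolynomial.eval ![d, 0] Q := fun d =>
      eval_aeval_aux Q 0 d
    have hroot : g.IsRoot 0 := by
      simp [IsRoot, hgev 0, h00]
    obtain ⟨f, hf⟩ : (X : Polynomial ℂ) ∣ g := by
      simpa using (dvd_iff_isRoot.2 hroot)
    refine ⟨f, fun d l => ?_⟩
    -- for each fixed l, compare polynomials in d
    have hpoly : MvPolynomial.aeval ![(X : Polynomial ℂ), C l] Q = (X + C (2 * l)) * f := by
      apply Polynomial.eq_of_infinite_eval_eq
      have hinf : Set.Infinite {x : ℂ | x ≠ 0} := by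
        have h1 : {x : ℂ | x ≠ 0} = ({0} : Set ℂ)ᶜ := by ext x; simp
        rw [h1]
        exact (Set.finite_singleton (0:ℂ)).infinite_compl
      apply hinf.mono
      intro x hx
      simp only [Set.mem_setOf_eq, eval_mul, eval_add, eval_X, eval_C]
      rw [eval_aeval_aux]
      have hk := key x l
      have hgx : MvPolynomial.eval ![x, (0:ℂ)] Q = x * f.eval x := by
        rw [← hgev, hf]; simp [mul_comm]
      rw [hgx] at hk
      have hx0 : (x:ℂ) ≠ 0 := hx
      exact mul_left_cancel₀ hx0 (by linear_combination hk)
    have := congrArg (Polynomial.eval d) hpoly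
    rw [eval_aeval_aux] at this
    simpa using this
  · rintro ⟨f, hf⟩ d l m
    simp only [hf]
    ring
end

section
/- Let a, b ∈ ℂ with a ≠ 1. A polynomial Q ∈ ℂ[∂, λ] satisfies (λ − μ)·Q(∂, λ + μ) = Q(∂ + λ, μ)·(∂ + aλ + b) − Q(∂ + μ, λ)·(∂ + aμ + b) as polynomials in ∂, λ, μ if and only if there exists f ∈ ℂ[∂] with Q(∂, λ) = (∂ + aλ + b)·f(∂ + λ). -/
open Polynomial

theorem evalAeval (Q : MvPolynomial (Fin 2) ℂ) (v : Fin 2 → ℂ[X]) (x : ℂ) :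
    (MvPolynomial.aeval v Q).eval x = MvPolynomial.eval (fun i => (v i).eval x) Q := by
  rw [MvPolynomial.aeval_def, show Polynomial.eval x (MvPolynomial.eval₂ (algebraMap ℂ ℂ[X]) v Q)
      = (Polynomial.evalRingHom x) (MvPolynomial.eval₂ (algebraMap ℂ ℂ[X]) v Q) from rfl,
    MvPolynomial.eval₂_comp_left (Polynomial.evalRingHom x)]
  have h : (Polynomial.evalRingHom x).comp (Polynomial.C : ℂ →+* ℂ[X]) = RingHom.id ℂ := by
    ext r; simp
  rw [show algebraMap ℂ ℂ[X] = (Polynomial.C : ℂ →+* ℂ[X]) from rfl, h]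
  rfl

theorem stmt_7 (a b : ℂ) (ha : a ≠ 1) (Q : MvPolynomial (Fin 2) ℂ) :
    (∀ d l m : ℂ,
        (l - m) * MvPolynomial.eval ![d, l + m] Q =
          MvPolynomial.eval ![d + l, m] Q * (d + a * l + b) -
            MvPolynomial.eval ![d + m, l] Q * (d + a * m + b)) ↔
      ∃ f : Polynomial ℂ, ∀ d l : ℂ,
        MvPolynomial.eval ![d, l] Q = (d + a * l + b) * f.eval (d + l) := by
  constructor
  · intro h
    -- Step 1: the m = 0 specialization
    have key : ∀ d l : ℂ, MvPolynomial.eval ![d, l] Q * (d + l + b)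
        = (d + a * l + b) * MvPolynomial.eval ![d + l, 0] Q := by
      intro d l
      have h0 := h d l 0
      simp only [add_zero, mul_zero, sub_zero] at h0
      linear_combination h0
    -- the one-variable polynomial g(x) = Q(x,0)
    set g : ℂ[X] := MvPolynomial.aeval ![X, (0 : ℂ[X])] Q with hg
    have gval : ∀ x : ℂ, g.eval x = MvPolynomial.eval ![x, 0] Q := by
      intro x
      rw [hg, evalAeval,
        show (fun i => Polynomial.eval x (![X, (0 : ℂ[X])] i)) = ![x, 0] from
          funext fun i => by fin_cases i <;> simp]
    -- g(-b) = 0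
    have hroot : g.eval (-b) = 0 := by
      have hk := key (1 - b) (-1)
      rw [show (1 - b) + (-1) = -b by ring] at hk
      rw [← gval] at hk
      have h1 : (1 - a) * g.eval (-b) = 0 := by linear_combination -hk
      rcases mul_eq_zero.mp h1 with h2 | h2
      · exact absurd (by linear_combination -h2) ha
      · exact h2
    obtain ⟨f, hf⟩ := Polynomial.dvd_iff_isRoot.mpr hroot
    have fval : ∀ x : ℂ, g.eval x = (x + b) * f.eval x := by
      intro x
      rw [hf]
      simp only [Polynomial.eval_mul, Polynomial.eval_sub, Polynomial.eval_X, Polynomial.eval_C]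
      ring
    refine ⟨f, fun d => ?_⟩
    -- compare one-variable polynomials in l
    set p : ℂ[X] := MvPolynomial.aeval ![Polynomial.C d, X] Q with hp
    have pval : ∀ l : ℂ, p.eval l = MvPolynomial.eval ![d, l] Q := by
      intro l
      rw [hp, evalAeval,
        show (fun i => Polynomial.eval l (![Polynomial.C d, X] i)) = ![d, l] from
          funext fun i => by fin_cases i <;> simp]
    set q : ℂ[X] := (Polynomial.C d + Polynomial.C a * X + Polynomial.C b) *
      (f.comp (Polynomial.C d + X)) with hq
    have qval : ∀ l : ℂ, q.eval l = (d + a * l + b) * f.eval (d + l) := by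
      intro l
      rw [hq]
      simp [Polynomial.eval_comp]
    have hpq : p = q := by
      apply Polynomial.eq_of_infinite_eval_eq
      apply Set.Infinite.mono (s := {(-b - d)}ᶜ)
      · intro x hx
        have hx0 : d + x + b ≠ 0 := by
          intro h0
          exact hx (by simp only [Set.mem_singleton_iff]; linear_combination h0)
        have hk := key d x
        rw [← gval, fval] at hk
        show p.eval x = q.eval x
        rw [pval, qval]
        apply mul_right_cancel₀ hx0
        linear_combination hk
      · exact (Set.finite_singleton _).infinite_compl
    intro l
    rw [← pval, hpq, qval]
  · rintro ⟨f, hf⟩ d l m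
    rw [hf d (l + m), hf (d + l) m, hf (d + m) l,
      show d + (l + m) = d + l + m by ring, show d + m + l = d + l + m by ring]
    ring
end

section
/- Let a, b ∈ ℂ with a ≠ 1 and let g ∈ ℂ[x]. If (x + λ + b) divides (x + aλ + b)·g(x + λ) in the polynomial ring ℂ[x, λ], then (x + b) divides g(x) in ℂ[x]. -/
/-!
Specialize `λ ↦ -(x + b)`. This kills the divisor `x + λ + b`, turns `x + aλ + b` into
`(1 - a)(x + b)` and `g(x + λ)` into the constant `g(-b)`, so `(1 - a) g(-b) (x + b) = 0`
in `R[x]` and `-b` is a root of `g`.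
-/

open MvPolynomial

namespace MvPolynomial

variable {R : Type*} [CommRing R]

noncomputable def specializeAntidiagonal (b : R) : MvPolynomial (Fin 2) R →ₐ[R] Polynomial R :=
  aeval ![Polynomial.X, -(Polynomial.X + Polynomial.C b)]

theorem specializeAntidiagonal_X_add_X_add_C (b : R) :
    specializeAntidiagonal b (X 0 + X 1 + C b) = 0 := by
  simp [specializeAntidiagonal]

theorem specializeAntidiagonal_X_add_C_mul_X_add_C (a b : R) :
    specializeAntidiagonal b (X 0 + C a * X 1 + C b) =
      Polynomial.C (1 - a) * (Polynomial.X + Polynomial.C b) := by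
  simp [specializeAntidiagonal]
  ring

theorem specializeAntidiagonal_aeval_X_add_X (b : R) (g : Polynomial R) :
    specializeAntidiagonal b (Polynomial.aeval (X 0 + X 1 : MvPolynomial (Fin 2) R) g) =
      Polynomial.C (g.eval (-b)) := by
  have hsum : specializeAntidiagonal b (X 0 + X 1) = Polynomial.C (-b) := by
    simp [specializeAntidiagonal]
  rw [← Polynomial.aeval_algHom_apply, hsum, ← Polynomial.algebraMap_eq,
    Polynomial.aeval_algebraMap_apply, Polynomial.coe_aeval_eq_eval]

theorem eval_neg_eq_zero_of_X_add_X_add_C_dvd [IsDomain R] {a b : R} (ha : a ≠ 1)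
    {g : Polynomial R}
    (h : (X 0 + X 1 + C b : MvPolynomial (Fin 2) R) ∣
        (X 0 + C a * X 1 + C b) * Polynomial.aeval (X 0 + X 1 : MvPolynomial (Fin 2) R) g) :
    g.eval (-b) = 0 := by
  have hspec := map_dvd (specializeAntidiagonal b) h
  rw [map_mul, specializeAntidiagonal_X_add_X_add_C, specializeAntidiagonal_X_add_C_mul_X_add_C,
    specializeAntidiagonal_aeval_X_add_X, zero_dvd_iff] at hspec
  have h1a : (1 - a : R) ≠ 0 := sub_ne_zero.mpr ha.symm
  simpa only [mul_eq_zero, Polynomial.C_eq_zero, h1a, Polynomial.X_add_C_ne_zero, or_self,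
    false_or] using hspec

end MvPolynomial

theorem stmt_10 (a b : ℂ) (ha : a ≠ 1) (g : Polynomial ℂ)
    (h : (X 0 + X 1 + C b : MvPolynomial (Fin 2) ℂ) ∣
        (X 0 + C a * X 1 + C b) * Polynomial.aeval (X 0 + X 1 : MvPolynomial (Fin 2) ℂ) g) :
    (Polynomial.X + Polynomial.C b) ∣ g := by
  simpa using Polynomial.dvd_iff_isRoot.mpr (eval_neg_eq_zero_of_X_add_X_add_C_dvd ha h)
end

section
/- Let a, b ∈ ℂ with a ≠ 0. Suppose I ⊆ ℂ[x] is a nonzero ideal such that for every g ∈ I and every j ≥ 0, the coefficient of λ^j in the polynomial g(x + λ)·(x + aλ + b) ∈ ℂ[x][λ] lies in I. Then I = ℂ[x]. -/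
open Polynomial

/-- The element `g(x+λ)·(x+aλ+b)` of `ℂ[x][λ]` (outer variable `λ`, inner `x`). -/
noncomputable def actPoly (a b : ℂ) (g : Polynomial ℂ) :
    Polynomial (Polynomial ℂ) :=
  Polynomial.aeval (Polynomial.C Polynomial.X + Polynomial.X :
      Polynomial (Polynomial ℂ)) g *
    (Polynomial.C Polynomial.X + Polynomial.C (Polynomial.C a) * Polynomial.X +
      Polynomial.C (Polynomial.C b))

lemma actPoly_top_coeff (a b : ℂ) (g : Polynomial ℂ) :
    (actPoly a b g).coeff (g.natDegree + 1) = C (g.leadingCoeff * a) := by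
  set r : Polynomial (Polynomial ℂ) := C X + X with hrdef
  have hr : r = X + C X := add_comm _ _
  have hrdeg : r.natDegree = 1 := by rw [hr]; exact natDegree_X_add_C _
  have hrmonic : r.Monic := by rw [hr]; exact monic_X_add_C _
  have hP : (aeval r) g = (g.map (C : ℂ →+* Polynomial ℂ)).comp r := by
    rw [comp, aeval_def, eval₂_map]
    rfl
  have hCinj : Function.Injective (C : ℂ →+* Polynomial ℂ) := C_injective
  have hPdeg : ((g.map (C : ℂ →+* Polynomial ℂ)).comp r).natDegree = g.natDegree := by
    rw [natDegree_comp, hrdeg, mul_one, natDegree_map_eq_of_injective hCinj]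
  have hPcoeff : ((g.map (C : ℂ →+* Polynomial ℂ)).comp r).coeff g.natDegree
      = C g.leadingCoeff := by
    rw [← hPdeg, coeff_natDegree]
    rw [leadingCoeff_comp (by rw [hrdeg]; norm_num), hrmonic.leadingCoeff, one_pow,
      mul_one, leadingCoeff_map]
  have hPhigh : ((g.map (C : ℂ →+* Polynomial ℂ)).comp r).coeff (g.natDegree + 1) = 0 :=
    coeff_eq_zero_of_natDegree_lt (by rw [hPdeg]; omega)
  have hQ : (C X + C (C a) * X + C (C b) : Polynomial (Polynomial ℂ))
      = C (C a) * X + C (X + C b) := by rw [map_add]; ring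
  rw [actPoly, hP, hQ, mul_add, coeff_add, mul_comm _ (X : Polynomial (Polynomial ℂ)),
    ← mul_assoc, coeff_mul_C, coeff_mul_X, coeff_mul_C, hPcoeff, hPhigh, zero_mul,
    add_zero, ← C_mul]

theorem stmt_12 (a b : ℂ) (ha : a ≠ 0) (I : Ideal (Polynomial ℂ)) (hI : I ≠ ⊥)
    (hclosed : ∀ g ∈ I, ∀ j : ℕ, (actPoly a b g).coeff j ∈ I) :
    I = ⊤ := by
  obtain ⟨g, hgI, hg0⟩ := (Submodule.ne_bot_iff I).mp hI
  have hmem := hclosed g hgI (g.natDegree + 1)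
  rw [actPoly_top_coeff] at hmem
  exact I.eq_top_of_isUnit_mem hmem
    (isUnit_C.mpr ((mul_ne_zero (leadingCoeff_ne_zero.mpr hg0) ha).isUnit))
end

section
/- In the Lie algebra of the previous construction (basis {A_m : m ≥ 0} ∪ {B_n : n ≥ 0} with [A_m, A_n] = (m−n)A_{m+n−1}, [A_m, B_n] = ((a−1)m − n)B_{m+n−1} + bB_{m+n}, [B_m, B_n] = 0), the span of {B_n : n ≥ 0} is an abelian ideal, and for each p ≥ 0 the subspace 𝓛_p spanned by {A_{s+1} : s ≥ p} ∪ {B_s : s ≥ p} is a Lie subalgebra satisfying [𝓛_0, 𝓛_p] ⊆ 𝓛_p. -/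
/-- Index type for the basis `{A_m} ∪ {B_n}`: `Sum.inl m = A_m`, `Sum.inr n = B_n`. -/
abbrev AnnIdx := ℕ ⊕ ℕ

/-- The bracket on basis elements (with `A_{-1} = B_{-1} = 0`). -/
noncomputable def annBasisBracket (a b : ℂ) : AnnIdx → AnnIdx → (AnnIdx →₀ ℂ)
  | Sum.inl m, Sum.inl n => Finsupp.single (Sum.inl (m + n - 1)) ((m : ℂ) - n)
  | Sum.inl m, Sum.inr n =>
      Finsupp.single (Sum.inr (m + n - 1)) ((a - 1) * m - n) +
        Finsupp.single (Sum.inr (m + n)) b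
  | Sum.inr n, Sum.inl m =>
      -(Finsupp.single (Sum.inr (m + n - 1)) ((a - 1) * m - n) +
        Finsupp.single (Sum.inr (m + n)) b)
  | Sum.inr _, Sum.inr _ => 0

/-- The bilinear extension of the basis bracket. -/
noncomputable def annBracket (a b : ℂ) (f g : AnnIdx →₀ ℂ) : AnnIdx →₀ ℂ :=
  f.sum fun i c => g.sum fun j d => (c * d) • annBasisBracket a b i j

/-- The span of `{B_n : n ≥ 0}`. -/
noncomputable def SB : Submodule ℂ (AnnIdx →₀ ℂ) :=
  Submodule.span ℂ {v | ∃ n : ℕ, v = Finsupp.single (Sum.inr n) (1 : ℂ)}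

/-- The subspace `𝓛_p`, spanned by `{A_{s+1} : s ≥ p} ∪ {B_s : s ≥ p}`. -/
noncomputable def Lp (p : ℕ) : Submodule ℂ (AnnIdx →₀ ℂ) :=
  Submodule.span ℂ
    ({v | ∃ s : ℕ, p ≤ s ∧ v = Finsupp.single (Sum.inl (s + 1)) (1 : ℂ)} ∪
      {v | ∃ s : ℕ, p ≤ s ∧ v = Finsupp.single (Sum.inr s) (1 : ℂ)})

/-! The bracket is the bilinear extension of `annBasisBracket`, so whether the bracket of two
spans lies in a subspace can be tested on the spanning vectors. There it is index arithmetic: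
a bracket with some `B_n` is a combination of `B`'s and `[B_m, B_n] = 0`, while
`[A_{m+1}, A_{n+1}]` is a multiple of `A_{m+n+1}` and `[A_{m+1}, B_n]` a combination of
`B_{m+n}` and `B_{m+n+1}`. -/

theorem Submodule.apply_mem_of_mem_span₂ {R M N P : Type*} [CommSemiring R] [AddCommMonoid M]
    [AddCommMonoid N] [AddCommMonoid P] [Module R M] [Module R N] [Module R P]
    (B : M →ₗ[R] N →ₗ[R] P) {s : Set M} {t : Set N} {r : Submodule R P}
    (h : ∀ x ∈ s, ∀ y ∈ t, B x y ∈ r) {x : M} {y : N} (hx : x ∈ span R s) (hy : y ∈ span R t) :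
    B x y ∈ r := by
  refine map₂_le.1 ?_ x hx y hy
  rw [map₂_span_span, span_le]
  rintro _ ⟨x, hx, y, hy, rfl⟩
  exact h x hx y hy

theorem single_inr_mem_SB (n : ℕ) (c : ℂ) : Finsupp.single (Sum.inr n : AnnIdx) c ∈ SB := by
  rw [← Finsupp.smul_single_one]
  exact Submodule.smul_mem _ c (Submodule.subset_span ⟨n, rfl⟩)

theorem single_inl_mem_Lp {p m : ℕ} (h : p < m) (c : ℂ) :
    Finsupp.single (Sum.inl m : AnnIdx) c ∈ Lp p := by
  obtain ⟨s, rfl⟩ := Nat.exists_eq_add_of_lt h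
  rw [← Finsupp.smul_single_one]
  exact Submodule.smul_mem _ c (Submodule.subset_span (Or.inl ⟨p + s, by omega, rfl⟩))

theorem single_inr_mem_Lp {p n : ℕ} (h : p ≤ n) (c : ℂ) :
    Finsupp.single (Sum.inr n : AnnIdx) c ∈ Lp p := by
  rw [← Finsupp.smul_single_one]
  exact Submodule.smul_mem _ c (Submodule.subset_span (Or.inr ⟨n, h, rfl⟩))

theorem Lp_antitone : Antitone Lp := by
  intro p q hpq
  apply Submodule.span_mono
  rintro _ (⟨s, hs, rfl⟩ | ⟨s, hs, rfl⟩)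
  exacts [Or.inl ⟨s, hpq.trans hs, rfl⟩, Or.inr ⟨s, hpq.trans hs, rfl⟩]

theorem span_range_single_one_eq_top :
    Submodule.span ℂ (Set.range fun i : AnnIdx => Finsupp.single i (1 : ℂ)) = ⊤ := by
  simpa using (Finsupp.basisSingleOne : Module.Basis AnnIdx ℂ (AnnIdx →₀ ℂ)).span_eq

section Bracket

variable (a b : ℂ)

noncomputable def annBracketBilin : (AnnIdx →₀ ℂ) →ₗ[ℂ] (AnnIdx →₀ ℂ) →ₗ[ℂ] (AnnIdx →₀ ℂ) :=
  Finsupp.linearCombination ℂ fun i => Finsupp.linearCombination ℂ (annBasisBracket a b i)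

theorem annBracket_eq_annBracketBilin (f g : AnnIdx →₀ ℂ) :
    annBracket a b f g = annBracketBilin a b f g := by
  simp only [annBracket, annBracketBilin, Finsupp.linearCombination_apply, Finsupp.sum, mul_smul,
    LinearMap.sum_apply, LinearMap.smul_apply, Finset.smul_sum]

theorem annBracketBilin_single_single (i j : AnnIdx) :
    annBracketBilin a b (Finsupp.single i 1) (Finsupp.single j 1) = annBasisBracket a b i j := by
  simp [annBracketBilin]

theorem annBracket_mem_SB (f : AnnIdx →₀ ℂ) {g : AnnIdx →₀ ℂ} (hg : g ∈ SB) :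
    annBracket a b f g ∈ SB := by
  rw [annBracket_eq_annBracketBilin]
  refine Submodule.apply_mem_of_mem_span₂ _ ?_
    (span_range_single_one_eq_top ▸ Submodule.mem_top) hg
  rintro _ ⟨i | m, rfl⟩ _ ⟨n, rfl⟩ <;> rw [annBracketBilin_single_single]
  · exact add_mem (single_inr_mem_SB _ _) (single_inr_mem_SB _ _)
  · exact zero_mem _

theorem annBracket_eq_zero_of_mem_SB {f g : AnnIdx →₀ ℂ} (hf : f ∈ SB) (hg : g ∈ SB) :
    annBracket a b f g = 0 := by
  rw [annBracket_eq_annBracketBilin, ← Submodule.mem_bot ℂ]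
  refine Submodule.apply_mem_of_mem_span₂ _ ?_ hf hg
  rintro _ ⟨m, rfl⟩ _ ⟨n, rfl⟩
  rw [annBracketBilin_single_single]
  exact zero_mem _

theorem annBracket_mem_Lp {p : ℕ} {f g : AnnIdx →₀ ℂ} (hf : f ∈ Lp 0) (hg : g ∈ Lp p) :
    annBracket a b f g ∈ Lp p := by
  rw [annBracket_eq_annBracketBilin]
  refine Submodule.apply_mem_of_mem_span₂ _ ?_ hf hg
  rintro _ (⟨m, -, rfl⟩ | ⟨m, -, rfl⟩) _ (⟨n, hn, rfl⟩ | ⟨n, hn, rfl⟩) <;>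
    rw [annBracketBilin_single_single]
  · exact single_inl_mem_Lp (by omega) _
  · exact add_mem (single_inr_mem_Lp (by omega) _) (single_inr_mem_Lp (by omega) _)
  · exact neg_mem (add_mem (single_inr_mem_Lp (by omega) _) (single_inr_mem_Lp (by omega) _))
  · exact zero_mem _

end Bracket

theorem stmt_17 (a b : ℂ) :
    (∀ f : AnnIdx →₀ ℂ, ∀ g ∈ SB, annBracket a b f g ∈ SB) ∧
      (∀ f ∈ SB, ∀ g ∈ SB, annBracket a b f g = 0) ∧
      (∀ p : ℕ, ∀ f ∈ Lp p, ∀ g ∈ Lp p, annBracket a b f g ∈ Lp p) ∧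
      (∀ p : ℕ, ∀ f ∈ Lp 0, ∀ g ∈ Lp p, annBracket a b f g ∈ Lp p) :=
  ⟨fun f _ hg => annBracket_mem_SB a b f hg,
    fun _ hf _ hg => annBracket_eq_zero_of_mem_SB a b hf hg,
    fun p _ hf _ hg => annBracket_mem_Lp a b (Lp_antitone p.zero_le hf) hg,
    fun _ _ hf _ hg => annBracket_mem_Lp a b hf hg⟩
end

section
/- Let a, b, γ ∈ ℂ with γ ≠ 0 and let Q(∂, λ) = β(∂ + 2λ) with β ∈ ℂ. Suppose p ∈ ℂ[λ] satisfies both (i) γ·((a − 1)λ − μ + b) = −μ·γ for all λ, μ, and (ii) (λ − μ)·p(λ + μ) + Q(−λ − μ, λ)·γ = λ·p(λ) − μ·p(μ) for all λ, μ. Then a = 1, b = 0, β·γ = 0 (hence β = 0), and p(λ) = αλ + β′ for some α, β′ ∈ ℂ. -/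
open Polynomial

theorem stmt_18 (a b γ β : ℂ) (hγ : γ ≠ 0) (p : Polynomial ℂ)
    (h1 : ∀ l m : ℂ, γ * ((a - 1) * l - m + b) = -m * γ)
    (h2 : ∀ l m : ℂ,
      (l - m) * p.eval (l + m) + (β * (-(l + m) + 2 * l)) * γ =
        l * p.eval l - m * p.eval m) :
    a = 1 ∧ b = 0 ∧ β * γ = 0 ∧ β = 0 ∧ ∃ α β' : ℂ, p = C α * X + C β' := by
  have hb : b = 0 := by
    have := h1 0 0
    simp at this
    rcases this with h | h
    · exact absurd h hγ
    · exact h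
  have ha : a = 1 := by
    have := h1 1 0
    rw [hb] at this
    simp at this
    rcases this with h | h
    · exact absurd h hγ
    · exact sub_eq_zero.mp h
  have hβγ : β * γ = 0 := by
    have := h2 1 0
    simp at this
    rcases this with (h | h) | h
    · rw [h, zero_mul]
    · norm_num at h
    · exact absurd h hγ
  have hβ : β = 0 := by
    rcases mul_eq_zero.mp hβγ with h | h
    · exact h
    · exact absurd h hγ
  -- simplified functional equation
  have h2' : ∀ l m : ℂ, (l - m) * p.eval (l + m) = l * p.eval l - m * p.eval m := by
    intro l m
    have := h2 l m
    rw [hβ] at this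
    simpa using this
  -- key: X * p' = p - C (p.eval 0)
  have hkey : ∀ l : ℂ, l * p.derivative.eval l = p.eval l - p.eval 0 := by
    intro l
    set q : Polynomial ℂ :=
      (C l - X) * (p.comp (C l + X)) - C (l * p.eval l) + X * p with hq
    have hq0 : q = 0 := by
      apply Polynomial.funext
      intro m
      simp [hq, eval_comp]
      linear_combination h2' l m
    have hd : q.derivative.eval 0 = 0 := by rw [hq0]; simp
    rw [hq] at hd
    simp [derivative_comp, eval_comp] at hd
    linear_combination hd
  have hpoly : X * p.derivative = p - C (p.coeff 0) := by
    apply Polynomial.funext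
    intro l
    have := hkey l
    simp [← Polynomial.coeff_zero_eq_eval_zero] at this ⊢
    linear_combination this
  have hcoeff : ∀ n, 2 ≤ n → p.coeff n = 0 := by
    intro n hn
    obtain ⟨k, rfl⟩ : ∃ k, n = k + 2 := ⟨n - 2, by omega⟩
    have := congrArg (fun q => q.coeff (k + 2)) hpoly
    simp [coeff_X_mul, coeff_derivative] at this
    have hk : ((k : ℂ) + 1) * p.coeff (k + 2) = 0 := by
      linear_combination this
    have hk1 : ((k : ℂ) + 1) ≠ 0 := by
      exact Nat.cast_add_one_ne_zero k
    exact (mul_eq_zero.mp hk).resolve_left hk1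
  refine ⟨ha, hb, hβγ, hβ, p.coeff 1, p.coeff 0, ?_⟩
  ext n
  match n with
  | 0 => simp
  | 1 => simp
  | (k + 2) =>
    rw [hcoeff (k + 2) (by omega)]
    simp [coeff_X, coeff_C]
end
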